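/- arXiv:0811.4281 — 4 statements merged into one kernel-verified Lean document; each statement's English description precedes it below -/
import Mathlib

section
/- In the convolution algebra 𝒜 on subsets of {1,…,n}, define D_{i} f(I) = f(I ∪ {i}) if i ∉ I and 0 otherwise. Then for any f ∈ 𝒜₀ (f(∅)=0), D_{i}(exp_𝒜 f) = (exp_𝒜 f) * (D_{i} f). -/
/-- Convolution product on the algebra of complex functions on subsets of `{1,…,n}`. -/
noncomputable def conv (n : ℕ) (f g : Finset (Fin n) → ℂ) : Finset (Fin n) → ℂ :=
  fun I => ∑ J ∈ I.powerset, f J * g (I \ J)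

/-- The unit of the convolution algebra: the indicator of the empty set. -/
def deltaA (n : ℕ) : Finset (Fin n) → ℂ := fun I => if I = ∅ then 1 else 0

/-- Convolution powers. -/
noncomputable def convPow (n : ℕ) (f : Finset (Fin n) → ℂ) : ℕ → (Finset (Fin n) → ℂ)
  | 0 => deltaA n
  | k + 1 => conv n f (convPow n f k)

/-- The exponential in the convolution algebra,
`exp_𝒜 f = 1_𝒜 + f + f^{*2}/2! + ⋯ + f^{*n}/n!`. -/
noncomputable def expA (n : ℕ) (f : Finset (Fin n) → ℂ) : Finset (Fin n) → ℂ :=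
  fun I => ∑ k ∈ Finset.range (n + 1), (Nat.factorial k : ℂ)⁻¹ * convPow n f k I

/-- The discrete derivative `D_i f(I) = f(I ∪ {i})` if `i ∉ I`, `0` otherwise. -/
noncomputable def Dd (n : ℕ) (i : Fin n) (f : Finset (Fin n) → ℂ) : Finset (Fin n) → ℂ :=
  fun I => if i ∈ I then 0 else f (insert i I)

/-!
On sets avoiding `i`, the operator `D_i` is a derivation of the convolution algebra: splitting
the subsets of `I ∪ {i}` according to whether they contain `i` gives the Leibniz rule. As
convolution is commutative and associative, `D_i (f^{*(k+1)}) = (k+1) f^{*k} * D_i f`, so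
`D_i (f^{*(k+1)}/(k+1)!) = f^{*k}/k! * D_i f`: differentiating the truncated exponential shifts
it down by one term. The one unmatched term, `f^{*n}/n! * D_i f`, vanishes on sets avoiding `i`,
because `f(∅) = 0` makes `f^{*k}` vanish on every set with fewer than `k` elements.
-/

section ConvolutionAlgebra

variable {n : ℕ}

lemma conv_comm (f g : Finset (Fin n) → ℂ) : conv n f g = conv n g f := by
  funext I
  refine Finset.sum_nbij' (I \ ·) (I \ ·) ?_ ?_ ?_ ?_ ?_ <;>
    simp only [Finset.mem_powerset] <;> intro J hJ
  · exact Finset.sdiff_subset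
  · exact Finset.sdiff_subset
  · exact Finset.sdiff_sdiff_eq_self hJ
  · exact Finset.sdiff_sdiff_eq_self hJ
  · rw [Finset.sdiff_sdiff_eq_self hJ, mul_comm]

-- Both sides sum over chains `K ⊆ J ⊆ I`: as `(J, K)` on the left, `(K, J \ K)` on the right.
lemma conv_assoc (f g h : Finset (Fin n) → ℂ) :
    conv n (conv n f g) h = conv n f (conv n g h) := by
  funext I
  simp only [conv, Finset.sum_mul, Finset.mul_sum]
  rw [Finset.sum_sigma', Finset.sum_sigma']
  refine Finset.sum_nbij' (fun p => ⟨p.2, p.1 \ p.2⟩) (fun p => ⟨p.1 ∪ p.2, p.1⟩)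
    ?_ ?_ ?_ ?_ ?_ <;> rintro ⟨J, K⟩ hJK <;>
    simp only [Finset.mem_sigma, Finset.mem_powerset] at hJK ⊢
  · exact ⟨hJK.2.trans hJK.1, Finset.sdiff_subset_sdiff hJK.1 le_rfl⟩
  · exact ⟨Finset.union_subset hJK.1 (hJK.2.trans Finset.sdiff_subset),
      Finset.subset_union_left⟩
  · simp [Finset.union_sdiff_of_subset hJK.2]
  · have hdisj : Disjoint J K := Finset.disjoint_of_subset_right hJK.2 Finset.disjoint_sdiff
    simp [Finset.union_sdiff_cancel_left hdisj]
  · rw [sdiff_sdiff_sdiff_cancel_right hJK.2, mul_assoc]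

lemma deltaA_conv (g : Finset (Fin n) → ℂ) : conv n (deltaA n) g = g := by
  funext I
  rw [conv, Finset.sum_eq_single ∅] <;> simp +contextual [deltaA]

lemma conv_deltaA (g : Finset (Fin n) → ℂ) : conv n g (deltaA n) = g := by
  rw [conv_comm, deltaA_conv]

lemma conv_smul_right (f g : Finset (Fin n) → ℂ) (c : ℂ) :
    conv n f (c • g) = c • conv n f g := by
  funext I
  simp only [conv, Pi.smul_apply, smul_eq_mul, Finset.mul_sum, mul_left_comm]

lemma conv_apply_congr_right {f g g' : Finset (Fin n) → ℂ} {I : Finset (Fin n)}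
    (h : ∀ J ⊆ I, g J = g' J) : conv n f g I = conv n f g' I :=
  Finset.sum_congr rfl fun _ _ => by rw [h _ Finset.sdiff_subset]

lemma convPow_apply_eq_zero_of_card_lt {f : Finset (Fin n) → ℂ} (hf : f ∅ = 0) {k : ℕ}
    {I : Finset (Fin n)} (hI : I.card < k) : convPow n f k I = 0 := by
  induction k generalizing I with
  | zero => exact absurd hI (Nat.not_lt_zero _)
  | succ k ih =>
    refine Finset.sum_eq_zero fun J hJ => ?_
    rw [Finset.mem_powerset] at hJ
    obtain rfl | hJne := J.eq_empty_or_nonempty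
    · rw [hf, zero_mul]
    · have hcard : (I \ J).card < k := by
        rw [Finset.card_sdiff_of_subset hJ]
        have := hJne.card_pos
        have := Finset.card_le_card hJ
        omega
      rw [ih hcard, mul_zero]

lemma conv_convPow_apply_eq_zero_of_card_lt {f : Finset (Fin n) → ℂ} (hf : f ∅ = 0) {k : ℕ}
    (g : Finset (Fin n) → ℂ) {I : Finset (Fin n)} (hI : I.card < k) :
    conv n (convPow n f k) g I = 0 :=
  Finset.sum_eq_zero fun J hJ => by
    rw [convPow_apply_eq_zero_of_card_lt hf
      ((Finset.card_le_card (Finset.mem_powerset.mp hJ)).trans_lt hI), zero_mul]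

lemma conv_expA_apply (f g : Finset (Fin n) → ℂ) (I : Finset (Fin n)) :
    conv n (expA n f) g I
      = ∑ k ∈ Finset.range (n + 1), (k.factorial : ℂ)⁻¹ * conv n (convPow n f k) g I := by
  simp only [conv, expA, Finset.sum_mul, Finset.mul_sum, mul_assoc]
  exact Finset.sum_comm

end ConvolutionAlgebra

section DiscreteDerivative

variable {n : ℕ}

lemma Dd_deltaA (i : Fin n) : Dd n i (deltaA n) = 0 := by
  funext I
  simp [Dd, deltaA]

lemma Dd_conv_apply {i : Fin n} (f g : Finset (Fin n) → ℂ) {I : Finset (Fin n)} (hi : i ∉ I) :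
    Dd n i (conv n f g) I = conv n (Dd n i f) g I + conv n f (Dd n i g) I := by
  rw [Dd, if_neg hi, conv, Finset.sum_powerset_insert hi, add_comm]
  congr 1 <;> refine Finset.sum_congr rfl fun J hJ => ?_ <;>
    have hiJ : i ∉ J := fun h => hi (Finset.mem_powerset.mp hJ h)
  · rw [Dd, if_neg hiJ, Finset.insert_sdiff_insert, Finset.sdiff_insert_of_notMem hi]
  · rw [Dd, if_neg (fun h => hi (Finset.mem_sdiff.mp h).1), Finset.insert_sdiff_of_notMem _ hiJ]

lemma Dd_convPow_succ_apply {i : Fin n} (f : Finset (Fin n) → ℂ) (k : ℕ) {I : Finset (Fin n)}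
    (hi : i ∉ I) :
    Dd n i (convPow n f (k + 1)) I = (k + 1) * conv n (convPow n f k) (Dd n i f) I := by
  induction k generalizing I with
  | zero =>
    simp only [convPow]
    rw [Dd_conv_apply _ _ hi, Dd_deltaA, conv_deltaA, deltaA_conv]
    simp [conv]
  | succ k ih =>
    have hD : conv n f (Dd n i (convPow n f (k + 1))) I
        = (k + 1) * conv n (convPow n f (k + 1)) (Dd n i f) I := by
      rw [conv_apply_congr_right (g' := ((k : ℂ) + 1) • conv n (convPow n f k) (Dd n i f))
        fun J hJ => ih fun hiJ => hi (hJ hiJ), conv_smul_right, ← conv_assoc]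
      rfl
    rw [convPow, Dd_conv_apply _ _ hi, hD, conv_comm (Dd n i f)]
    push_cast
    ring

lemma Dd_expA_apply (i : Fin n) (f : Finset (Fin n) → ℂ) (I : Finset (Fin n)) :
    Dd n i (expA n f) I
      = ∑ k ∈ Finset.range (n + 1), (k.factorial : ℂ)⁻¹ * Dd n i (convPow n f k) I := by
  unfold Dd expA
  split_ifs <;> simp

end DiscreteDerivative

/-- for `f ∈ 𝒜₀`, `D_i (exp_𝒜 f) = (exp_𝒜 f) * (D_i f)`
(an identity between the values on sets not containing `i`, the only sets on
which `D_i` carries information). -/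
theorem D_expA (n : ℕ) (i : Fin n) (f : Finset (Fin n) → ℂ) (hf : f ∅ = 0) :
    ∀ I : Finset (Fin n), i ∉ I →
      Dd n i (expA n f) I = conv n (expA n f) (Dd n i f) I := by
  intro I hi
  have hcard : I.card < n := by
    simpa using Finset.card_lt_univ_of_notMem hi
  rw [Dd_expA_apply, conv_expA_apply, Finset.sum_range_succ', Finset.sum_range_succ,
    conv_convPow_apply_eq_zero_of_card_lt hf _ hcard]
  simp only [convPow.eq_1, Dd_deltaA, Pi.zero_apply, mul_zero, add_zero]
  refine Finset.sum_congr rfl fun k _ => ?_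
  rw [Dd_convPow_succ_apply f k hi, Nat.factorial_succ]
  push_cast
  field_simp
end

section
/- Fix nonnegative reals b_i and numbers |ζ_{ij}| ≥ 0, and a choice function ι on nonempty subsets of {1,…,n}. The recursion h(∅,J) = δ_{∅,J}, and for I ≠ ∅, h(I,J) = e^{2b_{ι(I)}} Σ_{K⊆J} (∏_{i∈K} |ζ_{i,ι(I)}|) h(I'∪K, J∖K) with I' = I∖{ι(I)}, has unique solution h(I,J) = (∏_{i∈I∪J} e^{2b_i}) · Σ_{G ∈ 𝓕_I(J)} ∏_{{i,j}∈G} |ζ_{ij}|, where 𝓕_I(J) is the set of forests on I∪J in which each tree contains exactly one element of I. -/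
/-- Ordered pairs `(i,j)` with `i < j` and both endpoints in `I`: the possible
edges of a simple graph on vertex set `I ⊆ Fin n`. -/
def edgesOn (n : ℕ) (I : Finset (Fin n)) : Finset (Fin n × Fin n) :=
  Finset.univ.filter fun p => p.1 < p.2 ∧ p.1 ∈ I ∧ p.2 ∈ I

/-- Simple graphs on vertex set `I`, identified with their edge sets. -/
def graphsOn (n : ℕ) (I : Finset (Fin n)) : Finset (Finset (Fin n × Fin n)) :=
  (edgesOn n I).powerset

/-- Adjacency relation of an edge set. -/
def adjE {n : ℕ} (G : Finset (Fin n × Fin n)) (i j : Fin n) : Prop :=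
  (i, j) ∈ G ∨ (j, i) ∈ G

/-- The edge set `G` makes the (nonempty) vertex set `I` connected. -/
def ConnOn {n : ℕ} (I : Finset (Fin n)) (G : Finset (Fin n × Fin n)) : Prop :=
  I.Nonempty ∧ ∀ i ∈ I, ∀ j ∈ I, Relation.ReflTransGen (adjE G) i j

open Classical in
/-- Connected graphs on the vertex set `I`. -/
noncomputable def connGraphsOn (n : ℕ) (I : Finset (Fin n)) :
    Finset (Finset (Fin n × Fin n)) :=
  (graphsOn n I).filter (ConnOn I)

open Classical in
/-- Trees on the `n` labeled vertices `{1,…,n}`: connected graphs with `n-1` edges. -/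
noncomputable def treesOn (n : ℕ) : Finset (Finset (Fin n × Fin n)) :=
  (connGraphsOn n Finset.univ).filter fun G => G.card = n - 1

open Classical in
/-- Forests on `I ∪ J` rooted in `I`: cycle-free graphs on `I ∪ J` each of whose
connected components contains exactly one vertex of `I`.  Equivalently (as used
here), graphs on `I ∪ J` with exactly `|J|` edges such that every vertex of
`I ∪ J` is connected to exactly one element of `I`. -/
noncomputable def forestsOn (n : ℕ) (I J : Finset (Fin n)) :
    Finset (Finset (Fin n × Fin n)) :=
  (graphsOn n (I ∪ J)).filter fun G =>
    G.card = J.card ∧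
    ∀ v ∈ I ∪ J, ∃! i : Fin n, i ∈ I ∧ Relation.ReflTransGen (adjE G) v i

/-!
Deleting the root `x = ι(I)` from a forest rooted in `I` leaves a forest on `(I ∪ J) ∖ {x}`
rooted in `(I ∖ {x}) ∪ K`, where `K ⊆ J` is the set of neighbours of `x`; conversely, joining `x`
to every vertex of `K` gives back a forest rooted in `I`. Summing the edge weights over this
bijection shows that the forest sums satisfy the same recursion as `h`, and induction on
`|I| + |J|` concludes. The uniqueness of roots required in `𝓕_I(J)` is automatic: a graph in
which every vertex of `V` reaches `R` has `|V| ≤ |E| + |R|`, so in a graph on `I ∪ J` with `|J|`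
edges no vertex reaches two roots.
-/

lemma min_max_injective {α : Type*} [LinearOrder α] (x : α) :
    Function.Injective fun k : α => (min k x, max k x) := by
  intro k k' h
  simp only [Prod.mk.injEq] at h
  grind

open Finset Relation

section Reachability

variable {n : ℕ} {G H : Finset (Fin n × Fin n)}

instance : Std.Symm (adjE G) := ⟨fun _ _ => Or.symm⟩

lemma reflTransGen_adjE_symm {a b : Fin n} (h : ReflTransGen (adjE G) a b) :
    ReflTransGen (adjE G) b a :=
  Std.Symm.symm _ _ h

lemma adjE_mono (hGH : G ⊆ H) {a b : Fin n} : adjE G a b → adjE H a b :=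
  Or.imp (@hGH _) (@hGH _)

lemma adjE_union {a b : Fin n} : adjE (G ∪ H) a b ↔ adjE G a b ∨ adjE H a b := by
  simp only [adjE, mem_union]
  tauto

lemma reflTransGen_adjE_mono (hGH : G ⊆ H) {a b : Fin n} :
    ReflTransGen (adjE G) a b → ReflTransGen (adjE H) a b :=
  ReflTransGen.mono (fun _ _ => adjE_mono hGH) _ _

lemma reflTransGen_adjE_insert {e : Fin n × Fin n} {v w : Fin n}
    (h : ReflTransGen (adjE (insert e G)) v w) :
    ReflTransGen (adjE G) v w ∨ ReflTransGen (adjE G) v e.1 ∨ ReflTransGen (adjE G) v e.2 := by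
  induction h using ReflTransGen.head_induction_on with
  | refl => exact Or.inl .refl
  | @head v c hvc _ ih =>
    by_cases hv : v = e.1 ∨ v = e.2
    · rcases hv with rfl | rfl
      exacts [Or.inr (Or.inl .refl), Or.inr (Or.inr .refl)]
    have hvc : adjE G v c := by
      push Not at hv
      refine hvc.imp (fun h => ?_) (fun h => ?_) <;> rcases mem_insert.1 h with h | h
      exacts [absurd (congrArg Prod.fst h) hv.1, h, absurd (congrArg Prod.snd h) hv.2, h]
    exact ih.imp (.head hvc) (Or.imp (.head hvc) (.head hvc))

lemma card_le_card_add_card_of_forall_reflTransGen (G : Finset (Fin n × Fin n))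
    {V R : Finset (Fin n)} (hreach : ∀ v ∈ V, ∃ r ∈ R, ReflTransGen (adjE G) v r) : #V ≤ #G + #R := by
  induction G using Finset.induction_on generalizing R with
  | empty =>
    have hVR : V ⊆ R := fun v hv => by
      obtain ⟨r, hr, hvr⟩ := hreach v hv
      rwa [(reflTransGen_iff_eq fun _ h => by simp [adjE] at h).1 hvr] at hr
    simpa using card_le_card hVR
  | @insert e G he ih =>
    -- deleting `e` costs at most one extra root: `e.2` if `e.1` still reaches `R`, else `e.1`
    suffices ∃ R' : Finset (Fin n), #R' ≤ #R + 1 ∧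
        ∀ v ∈ V, ∃ r ∈ R', ReflTransGen (adjE G) v r by
      obtain ⟨R', hR', hV⟩ := this
      have := ih hV
      rw [card_insert_of_notMem he]
      omega
    by_cases h₁ : ∃ r ∈ R, ReflTransGen (adjE G) e.1 r
    · refine ⟨insert e.2 R, card_insert_le _ _, fun v hv => ?_⟩
      obtain ⟨r, hr, hvr⟩ := hreach v hv
      rcases reflTransGen_adjE_insert hvr with hvr | hv₁ | hv₂
      · exact ⟨r, mem_insert_of_mem hr, hvr⟩
      · obtain ⟨r', hr', h₁r'⟩ := h₁
        exact ⟨r', mem_insert_of_mem hr', hv₁.trans h₁r'⟩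
      · exact ⟨e.2, mem_insert_self _ _, hv₂⟩
    · refine ⟨insert e.1 R, card_insert_le _ _, fun v hv => ?_⟩
      obtain ⟨r, hr, hvr⟩ := hreach v hv
      rcases reflTransGen_adjE_insert hvr with hvr | hv₁ | hv₂
      · exact ⟨r, mem_insert_of_mem hr, hvr⟩
      · exact ⟨e.1, mem_insert_self _ _, hv₁⟩
      have h₂r := reflTransGen_adjE_insert <| reflTransGen_adjE_symm <|
        (reflTransGen_adjE_symm (reflTransGen_adjE_mono (subset_insert e G) hv₂)).trans hvr
      refine ⟨r, mem_insert_of_mem hr, hv₂.trans ?_⟩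
      rcases h₂r with h | h | h
      exacts [reflTransGen_adjE_symm h, absurd ⟨r, hr, reflTransGen_adjE_symm h⟩ h₁,
        reflTransGen_adjE_symm h]

lemma eq_of_reflTransGen_of_card_le {V R : Finset (Fin n)} (hcard : #G + #R ≤ #V)
    (hreach : ∀ v ∈ V, ∃ r ∈ R, ReflTransGen (adjE G) v r) {v r₁ r₂ : Fin n}
    (hr₁ : r₁ ∈ R) (hr₂ : r₂ ∈ R) (h₁ : ReflTransGen (adjE G) v r₁)
    (h₂ : ReflTransGen (adjE G) v r₂) : r₁ = r₂ := by
  by_contra hne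
  have hreach' : ∀ w ∈ V, ∃ r ∈ R.erase r₂, ReflTransGen (adjE G) w r := by
    intro w hw
    obtain ⟨r, hr, hwr⟩ := hreach w hw
    by_cases hrr : r = r₂
    · subst hrr
      exact ⟨r₁, mem_erase.2 ⟨hne, hr₁⟩, hwr.trans ((reflTransGen_adjE_symm h₂).trans h₁)⟩
    · exact ⟨r, mem_erase.2 ⟨hrr, hr⟩, hwr⟩
  have := card_le_card_add_card_of_forall_reflTransGen G hreach'
  have := card_erase_add_one hr₂
  omega

end Reachability

section Forests

variable {n : ℕ} {G : Finset (Fin n × Fin n)} {I J V : Finset (Fin n)}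

@[simp]
lemma mem_edgesOn {p : Fin n × Fin n} : p ∈ edgesOn n V ↔ p.1 < p.2 ∧ p.1 ∈ V ∧ p.2 ∈ V := by
  simp [edgesOn]

lemma mem_and_ne_of_adjE (hG : G ⊆ edgesOn n V) {a b : Fin n} (hab : adjE G a b) :
    a ∈ V ∧ b ∈ V ∧ a ≠ b := by
  rcases hab with h | h <;> have := mem_edgesOn.1 (hG h)
  exacts [⟨this.2.1, this.2.2, this.1.ne⟩, ⟨this.2.2, this.2.1, this.1.ne'⟩]

lemma mem_forestsOn_iff (hIJ : Disjoint I J) :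
    G ∈ forestsOn n I J ↔ G ⊆ edgesOn n (I ∪ J) ∧ #G = #J ∧
      ∀ v ∈ I ∪ J, ∃ i ∈ I, ReflTransGen (adjE G) v i := by
  simp only [forestsOn, graphsOn, mem_filter, mem_powerset]
  refine ⟨fun ⟨hG, hcard, hroot⟩ => ⟨hG, hcard, fun v hv => ?_⟩,
    fun ⟨hG, hcard, hroot⟩ => ⟨hG, hcard, fun v hv => ?_⟩⟩
  · obtain ⟨i, hi, -⟩ := hroot v hv
    exact ⟨i, hi⟩
  · obtain ⟨i, hi, hvi⟩ := hroot v hv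
    refine ⟨i, ⟨hi, hvi⟩, fun i' ⟨hi', hvi'⟩ => ?_⟩
    refine eq_of_reflTransGen_of_card_le (V := I ∪ J) ?_ hroot hi' hi hvi' hvi
    rw [card_union_of_disjoint hIJ]
    omega

lemma root_unique_of_mem_forestsOn (hG : G ∈ forestsOn n I J) {v i i' : Fin n} (hv : v ∈ I ∪ J)
    (hi : i ∈ I) (hi' : i' ∈ I) (h : ReflTransGen (adjE G) v i)
    (h' : ReflTransGen (adjE G) v i') : i = i' := by
  classical
  exact ((mem_filter.1 hG).2.2 v hv).unique ⟨hi, h⟩ ⟨hi', h'⟩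

lemma forestsOn_empty_left : forestsOn n ∅ J = if J = ∅ then {∅} else ∅ := by
  ext G
  rw [mem_forestsOn_iff (disjoint_empty_left J)]
  split_ifs with hJ
  · subst hJ
    rw [mem_singleton]
    constructor
    · rintro ⟨-, hcard, -⟩
      exact card_eq_zero.1 hcard
    · rintro rfl
      simp
  · obtain ⟨v, hv⟩ := nonempty_iff_ne_empty.2 hJ
    simpa using fun _ _ => ⟨v, hv⟩

end Forests

section Star

variable {n : ℕ} {G : Finset (Fin n × Fin n)} {K V W : Finset (Fin n)} {x : Fin n}

def starEdges (K : Finset (Fin n)) (x : Fin n) : Finset (Fin n × Fin n) :=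
  K.image fun k => (min k x, max k x)

def removeVertex (G : Finset (Fin n × Fin n)) (x : Fin n) : Finset (Fin n × Fin n) :=
  G.filter fun p => p.1 ≠ x ∧ p.2 ≠ x

def neighbors (G : Finset (Fin n × Fin n)) (x : Fin n) : Finset (Fin n) :=
  univ.filter fun k => (k, x) ∈ G ∨ (x, k) ∈ G

lemma mem_neighbors {k : Fin n} : k ∈ neighbors G x ↔ adjE G k x := by
  simp [neighbors, adjE]

lemma adjE_starEdges {a b : Fin n} :
    adjE (starEdges K x) a b ↔ a = x ∧ b ∈ K ∨ b = x ∧ a ∈ K := by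
  simp only [adjE, starEdges, mem_image, Prod.mk.injEq]
  constructor
  · rintro (⟨k, hk, ha, hb⟩ | ⟨k, hk, hb, ha⟩) <;> grind
  · rintro (⟨rfl, hb⟩ | ⟨rfl, ha⟩)
    · rcases le_total a b with h | h
      exacts [Or.inl ⟨b, hb, by grind⟩, Or.inr ⟨b, hb, by grind⟩]
    · rcases le_total a b with h | h
      exacts [Or.inl ⟨a, ha, by grind⟩, Or.inr ⟨a, ha, by grind⟩]

lemma card_starEdges : #(starEdges K x) = #K :=
  card_image_of_injective _ (min_max_injective x)

lemma prod_starEdges {M : Type*} [CommMonoid M] (z : Fin n → Fin n → M)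
    (hz : ∀ i j, z i j = z j i) : ∏ p ∈ starEdges K x, z p.1 p.2 = ∏ k ∈ K, z k x := by
  rw [starEdges, prod_image fun _ _ _ _ h => min_max_injective x h]
  refine prod_congr rfl fun k _ => ?_
  rcases le_total k x with h | h
  · simp [h]
  · simp [h, hz x k]

lemma starEdges_subset_edgesOn (hx : x ∈ V) (hK : K ⊆ V) (hxK : x ∉ K) :
    starEdges K x ⊆ edgesOn n V := by
  intro p hp
  obtain ⟨k, hk, rfl⟩ := mem_image.1 hp
  have hkx : k ≠ x := fun h => hxK (h ▸ hk)
  refine mem_edgesOn.2 ⟨min_lt_max.2 hkx, ?_, ?_⟩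
  · rcases min_choice k x with h | h <;> rw [h]
    exacts [hK hk, hx]
  · rcases max_choice k x with h | h <;> rw [h]
    exacts [hK hk, hx]

lemma removeVertex_union_starEdges_neighbors (hG : G ⊆ edgesOn n V) :
    removeVertex G x ∪ starEdges (neighbors G x) x = G := by
  ext ⟨a, b⟩
  simp only [removeVertex, starEdges, neighbors, mem_union, mem_filter, mem_image, mem_univ,
    true_and, Prod.mk.injEq]
  constructor
  · rintro (⟨h, -⟩ | ⟨k, hk | hk, rfl, rfl⟩)
    · exact h
    · have := mem_edgesOn.1 (hG hk)
      grind
    · have := mem_edgesOn.1 (hG hk)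
      grind
  · intro h
    have := (mem_edgesOn.1 (hG h)).1
    by_cases ha : a = x
    · exact Or.inr ⟨b, Or.inr (ha ▸ h), by grind⟩
    by_cases hb : b = x
    · exact Or.inr ⟨a, Or.inl (hb ▸ h), by grind⟩
    exact Or.inl ⟨h, ha, hb⟩

lemma disjoint_removeVertex_starEdges : Disjoint (removeVertex G x) (starEdges K x) := by
  refine disjoint_left.2 fun p hp hp' => ?_
  obtain ⟨k, -, rfl⟩ := mem_image.1 hp'
  have := (mem_filter.1 hp).2
  grind

lemma removeVertex_removeVertex_union_starEdges :
    removeVertex (removeVertex G x ∪ starEdges K x) x = removeVertex G x := by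
  ext ⟨a, b⟩
  simp only [removeVertex, starEdges, mem_filter, mem_union, mem_image, Prod.mk.injEq]
  grind

lemma neighbors_removeVertex_union_starEdges :
    neighbors (removeVertex G x ∪ starEdges K x) x = K := by
  ext k
  have hG : ¬adjE (removeVertex G x) k x := by simp [adjE, removeVertex]
  rw [mem_neighbors, adjE_union, or_iff_right hG, adjE_starEdges]
  grind

lemma removeVertex_eq_self (hG : G ⊆ edgesOn n W) (hxW : x ∉ W) : removeVertex G x = G := by
  refine filter_true_of_mem fun p hp => ?_
  have := mem_edgesOn.1 (hG hp)
  exact ⟨fun h => hxW (h ▸ this.2.1), fun h => hxW (h ▸ this.2.2)⟩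

end Star

section Decomposition

variable {n : ℕ} {G G' : Finset (Fin n × Fin n)} {I J K V W : Finset (Fin n)} {x : Fin n}

lemma edgesOn_mono (hVW : V ⊆ W) : edgesOn n V ⊆ edgesOn n W := fun p hp => by
  rw [mem_edgesOn] at hp ⊢
  exact ⟨hp.1, hVW hp.2.1, hVW hp.2.2⟩

lemma subset_edgesOn_of_mem_forestsOn (hG : G ∈ forestsOn n I J) :
    G ⊆ edgesOn n (I ∪ J) := by
  classical
  exact mem_powerset.1 (mem_filter.1 hG).1

lemma erase_union_union_sdiff (hxJ : x ∉ J) (hKJ : K ⊆ J) :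
    I.erase x ∪ K ∪ J \ K = (I ∪ J).erase x := by
  ext v
  simp only [mem_union, mem_erase, mem_sdiff]
  have := @hKJ v
  grind

lemma disjoint_erase_union_sdiff (hIJ : Disjoint I J) : Disjoint (I.erase x ∪ K) (J \ K) :=
  disjoint_union_left.2 ⟨disjoint_of_subset_left (erase_subset _ _)
    (disjoint_of_subset_right sdiff_subset hIJ), disjoint_sdiff⟩

lemma card_erase_union_add_card_sdiff_lt (hx : x ∈ I) (hKJ : K ⊆ J) :
    #(I.erase x ∪ K) + #(J \ K) < #I + #J := by
  have := card_union_le (I.erase x) K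
  have := card_erase_add_one hx
  have := card_sdiff_add_card_eq_card hKJ
  omega

lemma eq_or_reflTransGen_removeVertex {R : Finset (Fin n)} (hR : ∀ u, adjE G u x → u ∈ R)
    {v r : Fin n} (h : ReflTransGen (adjE G) v r) (hr : r ∈ insert x R) :
    v = x ∨ ∃ t ∈ R, ReflTransGen (adjE (removeVertex G x)) v t := by
  induction h using ReflTransGen.head_induction_on with
  | refl => exact (mem_insert.1 hr).imp id fun hr => ⟨r, hr, .refl⟩
  | @head v w hvw _ ih =>
    refine or_iff_not_imp_left.2 fun hvx => ?_
    by_cases hwx : w = x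
    · exact ⟨v, hR v (hwx ▸ hvw), .refl⟩
    have hvw' : adjE (removeVertex G x) v w :=
      hvw.imp (fun h => mem_filter.2 ⟨h, hvx, hwx⟩) (fun h => mem_filter.2 ⟨h, hwx, hvx⟩)
    obtain ⟨t, ht, hwt⟩ := ih.resolve_left hwx
    exact ⟨t, ht, hwt.head hvw'⟩

lemma neighbors_subset_of_mem_forestsOn (hG : G ∈ forestsOn n I J) (hx : x ∈ I) :
    neighbors G x ⊆ J := fun u hu => by
  have hux := mem_neighbors.1 hu
  obtain ⟨huIJ, -, hne⟩ := mem_and_ne_of_adjE (subset_edgesOn_of_mem_forestsOn hG) hux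
  refine (mem_union.1 huIJ).resolve_left fun huI => hne ?_
  exact root_unique_of_mem_forestsOn hG (mem_union_left J hx) huI hx
    (.single hux.symm) .refl

lemma removeVertex_mem_forestsOn (hIJ : Disjoint I J) (hx : x ∈ I) (hG : G ∈ forestsOn n I J) :
    removeVertex G x ∈ forestsOn n (I.erase x ∪ neighbors G x) (J \ neighbors G x) := by
  set N := neighbors G x
  have hNJ : N ⊆ J := neighbors_subset_of_mem_forestsOn hG hx
  rw [mem_forestsOn_iff hIJ] at hG
  obtain ⟨hsub, hcard, hroot⟩ := hG
  rw [mem_forestsOn_iff (disjoint_erase_union_sdiff hIJ),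
    erase_union_union_sdiff (disjoint_left.1 hIJ hx) hNJ]
  refine ⟨fun p hp => ?_, ?_, fun v hv => ?_⟩
  · obtain ⟨hpG, hp₁, hp₂⟩ := mem_filter.1 hp
    have := mem_edgesOn.1 (hsub hpG)
    exact mem_edgesOn.2 ⟨this.1, mem_erase.2 ⟨hp₁, this.2.1⟩, mem_erase.2 ⟨hp₂, this.2.2⟩⟩
  · have hdecomp : removeVertex G x ∪ starEdges N x = G :=
      removeVertex_union_starEdges_neighbors hsub
    have := congrArg card hdecomp
    rw [card_union_of_disjoint disjoint_removeVertex_starEdges, card_starEdges] at this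
    have := card_sdiff_add_card_eq_card hNJ
    omega
  · obtain ⟨hvx, hv⟩ := mem_erase.1 hv
    obtain ⟨r, hr, hvr⟩ := hroot v hv
    have hr' : r ∈ insert x (I.erase x ∪ N) := by
      rw [insert_eq, ← union_assoc, ← insert_eq, insert_erase hx]
      exact mem_union_left _ hr
    exact (eq_or_reflTransGen_removeVertex (fun u hu => mem_union_right _ (mem_neighbors.2 hu))
      hvr hr').resolve_left hvx

lemma union_starEdges_mem_forestsOn (hIJ : Disjoint I J) (hx : x ∈ I) (hKJ : K ⊆ J)
    (hG' : G' ∈ forestsOn n (I.erase x ∪ K) (J \ K)) : G' ∪ starEdges K x ∈ forestsOn n I J := by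
  have hxJ : x ∉ J := disjoint_left.1 hIJ hx
  rw [mem_forestsOn_iff (disjoint_erase_union_sdiff hIJ), erase_union_union_sdiff hxJ hKJ] at hG'
  obtain ⟨hsub, hcard, hroot⟩ := hG'
  have hG'x : removeVertex G' x = G' := removeVertex_eq_self hsub (notMem_erase x _)
  rw [mem_forestsOn_iff hIJ]
  refine ⟨union_subset (hsub.trans (edgesOn_mono (erase_subset _ _))) ?_, ?_, fun v hv => ?_⟩
  · exact starEdges_subset_edgesOn (mem_union_left J hx) (hKJ.trans subset_union_right)
      fun h => hxJ (hKJ h)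
  · have hdisj : Disjoint G' (starEdges K x) := hG'x ▸ disjoint_removeVertex_starEdges
    rw [card_union_of_disjoint hdisj, card_starEdges, hcard, card_sdiff_add_card_eq_card hKJ]
  by_cases hvx : v = x
  · exact ⟨x, hx, hvx ▸ .refl⟩
  obtain ⟨r, hr, hvr⟩ := hroot v (mem_erase.2 ⟨hvx, hv⟩)
  have hvr' := reflTransGen_adjE_mono subset_union_left hvr (H := G' ∪ starEdges K x)
  rcases mem_union.1 hr with hrI | hrK
  · exact ⟨r, mem_of_mem_erase hrI, hvr'⟩
  · exact ⟨x, hx, hvr'.tail (adjE_mono subset_union_right (adjE_starEdges.2 (Or.inr ⟨rfl, hrK⟩)))⟩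

lemma sum_forestsOn_eq_sum_powerset {M : Type*} [CommSemiring M] (z : Fin n → Fin n → M)
    (hz : ∀ i j, z i j = z j i) (hIJ : Disjoint I J) (hx : x ∈ I) :
    ∑ G ∈ forestsOn n I J, ∏ p ∈ G, z p.1 p.2 =
      ∑ K ∈ J.powerset, (∏ k ∈ K, z k x) *
        ∑ G' ∈ forestsOn n (I.erase x ∪ K) (J \ K), ∏ p ∈ G', z p.1 p.2 := by
  simp_rw [mul_sum]
  rw [sum_sigma']
  refine sum_nbij' (fun G => ⟨neighbors G x, removeVertex G x⟩)
    (fun q => q.2 ∪ starEdges q.1 x) (fun G hG => ?_) (fun q hq => ?_) (fun G hG => ?_)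
    (fun q hq => ?_) (fun G hG => ?_)
  · exact mem_sigma.2 ⟨mem_powerset.2 (neighbors_subset_of_mem_forestsOn hG hx),
      removeVertex_mem_forestsOn hIJ hx hG⟩
  · obtain ⟨hK, hG'⟩ := mem_sigma.1 hq
    exact union_starEdges_mem_forestsOn hIJ hx (mem_powerset.1 hK) hG'
  · exact removeVertex_union_starEdges_neighbors (subset_edgesOn_of_mem_forestsOn hG)
  · obtain ⟨K, G'⟩ := q
    obtain ⟨hK, hG'⟩ := mem_sigma.1 hq
    dsimp only at hK hG' ⊢
    have hsub := subset_edgesOn_of_mem_forestsOn hG'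
    rw [erase_union_union_sdiff (disjoint_left.1 hIJ hx) (mem_powerset.1 hK)] at hsub
    rw [← removeVertex_eq_self hsub (notMem_erase x _), neighbors_removeVertex_union_starEdges,
      removeVertex_removeVertex_union_starEdges]
  · conv_lhs => rw [← removeVertex_union_starEdges_neighbors (x := x)
      (subset_edgesOn_of_mem_forestsOn hG)]
    rw [prod_union disjoint_removeVertex_starEdges, prod_starEdges z hz, mul_comm]

end Decomposition

theorem h_recursion_solution_general (n : ℕ) (z : Fin n → Fin n → ℝ)
    (hzsym : ∀ i j, z i j = z j i)
    (b : Fin n → ℝ)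
    (iota : Finset (Fin n) → Fin n) (hiota : ∀ I, I.Nonempty → iota I ∈ I)
    (h : Finset (Fin n) → Finset (Fin n) → ℝ)
    (h0 : ∀ J : Finset (Fin n), h ∅ J = if J = ∅ then 1 else 0)
    (hrec : ∀ I J : Finset (Fin n), I.Nonempty → Disjoint I J →
      h I J = Real.exp (2 * b (iota I)) *
        ∑ K ∈ J.powerset, (∏ i ∈ K, z i (iota I)) *
          h (I.erase (iota I) ∪ K) (J \ K)) :
    ∀ I J : Finset (Fin n), Disjoint I J →
      h I J = (∏ i ∈ I ∪ J, Real.exp (2 * b i)) *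
        ∑ G ∈ forestsOn n I J, ∏ p ∈ G, z p.1 p.2 := by
  intro I J hIJ
  induction hN : #I + #J using Nat.strong_induction_on generalizing I J with
  | _ N ih =>
  rcases I.eq_empty_or_nonempty with rfl | hI
  · rw [h0, forestsOn_empty_left]
    split_ifs with hJ <;> simp [hJ]
  have hx : iota I ∈ I := hiota I hI
  rw [hrec I J hI hIJ, sum_forestsOn_eq_sum_powerset z hzsym hIJ hx,
    ← mul_prod_erase (I ∪ J) (fun i => Real.exp (2 * b i)) (mem_union_left J hx), mul_assoc]
  congr 1
  rw [mul_sum]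
  refine sum_congr rfl fun K hK => ?_
  have hKJ := mem_powerset.1 hK
  have hlt := card_erase_union_add_card_sdiff_lt hx hKJ
  rw [ih _ (hN ▸ hlt) _ _ (disjoint_erase_union_sdiff hIJ) rfl,
    erase_union_union_sdiff (disjoint_left.1 hIJ hx) hKJ]
  ring

/-- the Kirkwood–Salsburg-type recursion for `h` has the forest
formula as its unique solution:
`h(I,J) = (∏_{i∈I∪J} e^{2b_i}) Σ_{G ∈ 𝓕_I(J)} ∏_{{i,j}∈G} |ζ_{ij}|`. -/
theorem h_recursion_solution (n : ℕ) (z : Fin n → Fin n → ℝ)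
    (hz : ∀ i j, 0 ≤ z i j) (hzsym : ∀ i j, z i j = z j i)
    (b : Fin n → ℝ) (hb : ∀ i, 0 ≤ b i)
    (iota : Finset (Fin n) → Fin n) (hiota : ∀ I, I.Nonempty → iota I ∈ I)
    (h : Finset (Fin n) → Finset (Fin n) → ℝ)
    (h0 : ∀ J : Finset (Fin n), h ∅ J = if J = ∅ then 1 else 0)
    (hrec : ∀ I J : Finset (Fin n), I.Nonempty → Disjoint I J →
      h I J = Real.exp (2 * b (iota I)) *
        ∑ K ∈ J.powerset, (∏ i ∈ K, z i (iota I)) *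
          h (I.erase (iota I) ∪ K) (J \ K)) :
    ∀ I J : Finset (Fin n), Disjoint I J →
      h I J = (∏ i ∈ I ∪ J, Real.exp (2 * b i)) *
        ∑ G ∈ forestsOn n I J, ∏ p ∈ G, z p.1 p.2 :=
  h_recursion_solution_general n z hzsym b iota hiota h h0 hrec
end

section
/- For forests on {1,…,n} rooted in a set I (disjoint from J, I∪J = vertex set) and any element ι ∈ I with I' = I∖{ι}: Σ_{G ∈ 𝓕_I(J)} ∏_{{i,j}∈G} w_{ij} = Σ_{K⊆J} (∏_{i∈K} w_{i,ι}) · Σ_{G' ∈ 𝓕_{I'∪K}(J∖K)} ∏_{{i,j}∈G'} w_{ij}, for arbitrary nonnegative weights w_{ij}. -/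
/-!
Deleting the root `ι` from a forest `G ∈ 𝓕_I(J)` removes the star from `ι` to its set of
neighbours `K ⊆ J`, and what remains is a forest in `𝓕_{I' ∪ K}(J ∖ K)`; conversely, adding the
star from `ι` to `K` to such a forest gives back a forest in `𝓕_I(J)`. This bijection
`G ↦ (K, G')` multiplies the weight by `∏_{k ∈ K} w_{kι}`.

Membership on both sides follows from the criterion that a graph on `I ∪ J` with `|J|` edges in
which every vertex is joined to `I` is a forest rooted in `I`: a graph with `m` edges on `V` has
at least `|V| - m` components, so no component can contain two roots.
-/

namespace RootedForest

open Finset Relation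

variable {n : ℕ}

section Reachability

variable {G H : Finset (Fin n × Fin n)} {S T : Finset (Fin n)} {u v : Fin n}

instance (G : Finset (Fin n × Fin n)) : Std.Symm (adjE G) := ⟨fun _ _ => Or.symm⟩

lemma adjE_union : adjE (G ∪ H) u v ↔ adjE G u v ∨ adjE H u v := by
  simp only [adjE, mem_union]; tauto

lemma adjE_insert {e : Fin n × Fin n} :
    adjE (insert e G) u v ↔ (u, v) = e ∨ (v, u) = e ∨ adjE G u v := by
  simp only [adjE, mem_insert]; tauto

def Reaches (G : Finset (Fin n × Fin n)) (S : Finset (Fin n)) (v : Fin n) : Prop :=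
  ∃ s ∈ S, ReflTransGen (adjE G) v s

lemma Reaches.of_mem (h : v ∈ S) : Reaches G S v := ⟨v, h, .refl⟩

lemma Reaches.head (huv : adjE G u v) (hv : Reaches G S v) : Reaches G S u :=
  let ⟨s, hs, hvs⟩ := hv; ⟨s, hs, .head huv hvs⟩

lemma Reaches.mono (hGH : G ⊆ H) (hST : S ⊆ T) (h : Reaches G S v) : Reaches H T v :=
  let ⟨s, hs, hvs⟩ := h
  ⟨s, hST hs, ReflTransGen.mono (fun _ _ => Or.imp (@hGH _) (@hGH _)) _ _ hvs⟩

lemma Reaches.induction {P : Fin n → Prop} (h : Reaches G S v) (hS : ∀ s ∈ S, P s)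
    (hP : ∀ u v, adjE G u v → P v → P u) : P v := by
  obtain ⟨s, hs, hvs⟩ := h
  induction hvs using ReflTransGen.head_induction_on with
  | refl => exact hS s hs
  | head huv _ ih => exact hP _ _ huv ih

lemma Reaches.trans (h : Reaches G S v) (hS : ∀ s ∈ S, Reaches G T s) : Reaches G T v :=
  h.induction hS fun _ _ huv hv => hv.head huv

theorem card_le_card_add_card_of_reaches (G : Finset (Fin n × Fin n)) {V R : Finset (Fin n)}
    (hV : ∀ v ∈ V, Reaches G R v) : #V ≤ #R + #G := by
  induction G using Finset.induction_on generalizing R with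
  | empty =>
    refine (card_le_card fun v hv => (hV v hv).induction (fun _ => id) ?_).trans (by simp)
    rintro _ _ (h | h) <;> simp at h
  | insert e G₀ he ih =>
    -- Removing `e` keeps every vertex joined to `S`, as soon as both ends of `e` are or neither is.
    have key : ∀ S, R ⊆ S → (Reaches G₀ S e.1 ↔ Reaches G₀ S e.2) → #V ≤ #S + #G₀ := by
      refine fun S hRS hS => ih fun v hv => (hV v hv).induction
        (fun s hs => .of_mem (hRS hs)) fun u c huc hc => ?_
      rcases adjE_insert.1 huc with rfl | rfl | huc
      · exact hS.2 hc
      · exact hS.1 hc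
      · exact hc.head huc
    rw [card_insert_of_notMem he]
    by_cases h₁ : Reaches G₀ R e.1
    · have := key (insert e.2 R) (subset_insert _ _)
        ⟨fun _ => .of_mem (mem_insert_self _ _), fun _ => h₁.mono subset_rfl (subset_insert _ _)⟩
      have := card_insert_le e.2 R
      omega
    by_cases h₂ : Reaches G₀ R e.2
    · have := key (insert e.1 R) (subset_insert _ _)
        ⟨fun _ => h₂.mono subset_rfl (subset_insert _ _), fun _ => .of_mem (mem_insert_self _ _)⟩
      have := card_insert_le e.1 R
      omega
    · have := key R subset_rfl (iff_of_false h₁ h₂)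
      omega

end Reachability

/-- Uniqueness of the root is automatic: two roots in one component would leave
`#I + #J` vertices joined to `#I - 1` roots by `#J` edges. -/
theorem mem_forestsOn_iff {I J : Finset (Fin n)} (hIJ : Disjoint I J)
    {G : Finset (Fin n × Fin n)} :
    G ∈ forestsOn n I J ↔ G ⊆ edgesOn n (I ∪ J) ∧ #G = #J ∧ ∀ v ∈ I ∪ J, Reaches G I v := by
  simp only [forestsOn, graphsOn, mem_filter, mem_powerset]
  refine and_congr_right fun _ => and_congr_right fun hcard =>
    ⟨fun h v hv => (h v hv).exists, fun h v hv => ?_⟩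
  obtain ⟨i, hi, hvi⟩ := h v hv
  refine ⟨i, ⟨hi, hvi⟩, fun j ⟨hj, hvj⟩ => by_contra fun hji => ?_⟩
  have hreach : ∀ u ∈ I ∪ J, Reaches G (I.erase i) u := by
    intro u hu
    obtain ⟨k, hk, huk⟩ := h u hu
    by_cases hki : k = i
    · subst hki
      exact ⟨j, mem_erase.2 ⟨hji, hj⟩, huk.trans ((symm hvi).trans hvj)⟩
    · exact ⟨k, mem_erase.2 ⟨hki, hk⟩, huk⟩
  have := card_le_card_add_card_of_reaches G hreach
  rw [card_union_of_disjoint hIJ, card_erase_of_mem hi, hcard] at this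
  have := card_pos.2 ⟨i, hi⟩
  omega

section Star

variable {G G' : Finset (Fin n × Fin n)} {J K : Finset (Fin n)} {ι a b : Fin n}

/-- The edge `{a, b}` in the normal form of `edgesOn`. -/
def edge (a b : Fin n) : Fin n × Fin n := (min a b, max a b)

def star (ι : Fin n) (K : Finset (Fin n)) : Finset (Fin n × Fin n) := K.image (edge ι)

def deleteVertex (G : Finset (Fin n × Fin n)) (ι : Fin n) : Finset (Fin n × Fin n) :=
  G.filter fun p => p.1 ≠ ι ∧ p.2 ≠ ι

open Classical in
noncomputable def neighbors (G : Finset (Fin n × Fin n)) (ι : Fin n) (J : Finset (Fin n)) :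
    Finset (Fin n) :=
  J.filter (adjE G ι)

def Avoids (G : Finset (Fin n × Fin n)) (ι : Fin n) : Prop :=
  ∀ p ∈ G, p.1 ≠ ι ∧ p.2 ≠ ι

lemma mem_neighbors : a ∈ neighbors G ι J ↔ a ∈ J ∧ adjE G ι a := by
  classical
  simp [neighbors]

lemma edge_comm (a b : Fin n) : edge a b = edge b a := by
  simp only [edge, min_comm, max_comm]

lemma edge_eq_or (a b : Fin n) : edge a b = (a, b) ∨ edge a b = (b, a) := by
  rcases le_total a b with h | h
  · simp [edge, h]
  · simp [edge, h]

lemma edge_injective (ι : Fin n) : Function.Injective (edge ι) := by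
  intro a b h
  simp only [edge, Prod.mk.injEq, Fin.ext_iff, Fin.coe_min, Fin.coe_max] at h ⊢
  omega

lemma adjE_iff_edge_mem (hG : ∀ p ∈ G, edge p.1 p.2 = p) : adjE G a b ↔ edge a b ∈ G := by
  constructor
  · rintro (h | h)
    · exact (hG _ h).symm ▸ h
    · exact edge_comm a b ▸ (hG _ h).symm ▸ h
  · intro h
    rcases edge_eq_or a b with e | e <;> rw [e] at h
    · exact Or.inl h
    · exact Or.inr h

lemma edge_edge (a b : Fin n) : edge (edge a b).1 (edge a b).2 = edge a b := by
  simp [edge]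

lemma adjE_deleteVertex : adjE (deleteVertex G ι) a b ↔ adjE G a b ∧ a ≠ ι ∧ b ≠ ι := by
  simp only [adjE, deleteVertex, mem_filter]; tauto

lemma adjE_star_left : adjE (star ι K) ι a ↔ a ∈ K := by
  rw [adjE_iff_edge_mem (by simp [star, edge_edge]), star, (edge_injective ι).mem_finset_image]

lemma avoids_deleteVertex : Avoids (deleteVertex G ι) ι :=
  fun _ hp => (mem_filter.1 hp).2

lemma deleteVertex_union_star_neighbors (hG : ∀ p ∈ G, edge p.1 p.2 = p)
    (hJ : ∀ k, adjE G ι k → k ∈ J) :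
    deleteVertex G ι ∪ star ι (neighbors G ι J) = G := by
  have hnbr : ∀ k, adjE G ι k → edge ι k ∈ star ι (neighbors G ι J) := fun k hk =>
    mem_image_of_mem _ (mem_neighbors.2 ⟨hJ k hk, hk⟩)
  ext p
  refine ⟨fun h => ?_, fun hp => ?_⟩
  · rcases mem_union.1 h with h | h
    · exact (mem_filter.1 h).1
    · obtain ⟨k, hk, rfl⟩ := mem_image.1 h
      exact (adjE_iff_edge_mem hG).1 (mem_neighbors.1 hk).2
  · by_cases h : p.1 ≠ ι ∧ p.2 ≠ ι
    · exact mem_union_left _ (mem_filter.2 ⟨hp, h⟩)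
    refine mem_union_right _ ?_
    rcases not_and_or.1 h with h | h <;> rw [not_not] at h <;> subst h
    · simpa only [hG p hp] using hnbr p.2 (Or.inl hp)
    · simpa only [edge_comm, hG p hp] using hnbr p.1 (Or.inr hp)

variable (hG' : Avoids G' ι)
include hG'

lemma disjoint_star : Disjoint G' (star ι K) := by
  refine disjoint_left.2 fun p hp hpK => ?_
  obtain ⟨k, -, rfl⟩ := mem_image.1 hpK
  have := hG' _ hp
  rcases edge_eq_or ι k with h | h <;> rw [h] at this
  exacts [this.1 rfl, this.2 rfl]

lemma card_union_star : #(G' ∪ star ι K) = #G' + #K := by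
  rw [card_union_of_disjoint (disjoint_star hG'), star,
    card_image_of_injective _ (edge_injective ι)]

lemma prod_union_star {M : Type*} [CommMonoid M] {w : Fin n → Fin n → M}
    (hw : ∀ i j, w i j = w j i) :
    ∏ p ∈ G' ∪ star ι K, w p.1 p.2 = (∏ k ∈ K, w k ι) * ∏ p ∈ G', w p.1 p.2 := by
  rw [prod_union (disjoint_star hG'), star, prod_image (edge_injective ι).injOn, mul_comm]
  congr 1
  refine prod_congr rfl fun k _ => ?_
  rcases edge_eq_or ι k with h | h <;> rw [h]
  exact hw ι k

lemma deleteVertex_union_star : deleteVertex (G' ∪ star ι K) ι = G' := by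
  rw [deleteVertex, filter_union, filter_true_of_mem hG', filter_false_of_mem, union_empty]
  intro p hp
  obtain ⟨k, -, rfl⟩ := mem_image.1 hp
  rcases edge_eq_or ι k with h | h <;> simp [h]

lemma neighbors_union_star (hK : K ⊆ J) : neighbors (G' ∪ star ι K) ι J = K := by
  have : ∀ a, ¬ adjE G' ι a := by
    rintro a (h | h)
    exacts [(hG' _ h).1 rfl, (hG' _ h).2 rfl]
  ext a
  simp only [mem_neighbors, adjE_union, adjE_star_left, this, false_or]
  exact ⟨And.right, fun ha => ⟨hK ha, ha⟩⟩

end Star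

section EdgesOn

variable {G : Finset (Fin n × Fin n)} {V : Finset (Fin n)} {ι a b : Fin n}

lemma mem_edgesOn {p : Fin n × Fin n} : p ∈ edgesOn n V ↔ p.1 < p.2 ∧ p.1 ∈ V ∧ p.2 ∈ V := by
  simp [edgesOn]

lemma edge_fst_snd_of_subset_edgesOn (hG : G ⊆ edgesOn n V) : ∀ p ∈ G, edge p.1 p.2 = p :=
  fun _ hp => by simp [edge, (mem_edgesOn.1 (hG hp)).1.le]

lemma mem_and_ne_of_adjE (hG : G ⊆ edgesOn n V) (h : adjE G a b) : b ∈ V ∧ a ≠ b := by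
  rcases h with h | h <;> have := mem_edgesOn.1 (hG h)
  exacts [⟨this.2.2, this.1.ne⟩, ⟨this.2.1, this.1.ne'⟩]

lemma avoids_of_subset_edgesOn_erase (hG : G ⊆ edgesOn n (V.erase ι)) : Avoids G ι := by
  intro _ hp
  have h := mem_edgesOn.1 (hG hp)
  exact ⟨(mem_erase.1 h.2.1).1, (mem_erase.1 h.2.2).1⟩

lemma deleteVertex_subset_edgesOn_erase (hG : G ⊆ edgesOn n V) :
    deleteVertex G ι ⊆ edgesOn n (V.erase ι) := fun p hp => by
  obtain ⟨hpG, h1, h2⟩ := mem_filter.1 hp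
  have h := mem_edgesOn.1 (hG hpG)
  exact mem_edgesOn.2 ⟨h.1, mem_erase.2 ⟨h1, h.2.1⟩, mem_erase.2 ⟨h2, h.2.2⟩⟩

lemma edgesOn_mono {W : Finset (Fin n)} (h : V ⊆ W) : edgesOn n V ⊆ edgesOn n W :=
  fun _ hp => have h' := mem_edgesOn.1 hp; mem_edgesOn.2 ⟨h'.1, h h'.2.1, h h'.2.2⟩

lemma star_subset_edgesOn {K : Finset (Fin n)} (hι : ι ∈ V) (hK : K ⊆ V) (hιK : ι ∉ K) :
    star ι K ⊆ edgesOn n V := by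
  intro p hp
  obtain ⟨k, hk, rfl⟩ := mem_image.1 hp
  rcases (ne_of_mem_of_not_mem hk hιK).lt_or_gt with h | h <;>
    simp [edge, mem_edgesOn, h.le, h, hK hk, hι]

end EdgesOn

section RootDeletion

variable {I J K : Finset (Fin n)} {G G' : Finset (Fin n × Fin n)} {ι : Fin n}

lemma erase_union_union_sdiff (hK : K ⊆ J) (hιJ : ι ∉ J) :
    I.erase ι ∪ K ∪ J \ K = (I ∪ J).erase ι := by
  rw [union_assoc, union_sdiff_of_subset hK, erase_union_distrib, erase_eq_of_notMem hιJ]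

lemma disjoint_erase_union_sdiff (hIJ : Disjoint I J) : Disjoint (I.erase ι ∪ K) (J \ K) :=
  disjoint_union_left.2
    ⟨(hIJ.mono_left (erase_subset _ _)).mono_right sdiff_subset, disjoint_sdiff⟩

lemma subset_edgesOn_of_mem_forestsOn (hG : G ∈ forestsOn n I J) : G ⊆ edgesOn n (I ∪ J) := by
  classical
  exact mem_powerset.1 (mem_filter.1 hG).1

lemma mem_of_adjE_root (hG : G ∈ forestsOn n I J) (hι : ι ∈ I) {k : Fin n} (h : adjE G ι k) :
    k ∈ J := by
  obtain ⟨hkIJ, hιk⟩ := mem_and_ne_of_adjE (subset_edgesOn_of_mem_forestsOn hG) h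
  refine (mem_union.1 hkIJ).resolve_left fun hkI => hιk ?_
  classical
  exact ((mem_filter.1 hG).2.2 ι (mem_union_left _ hι)).unique ⟨hι, .refl⟩ ⟨hkI, .single h⟩

lemma deleteVertex_union_star_neighbors_of_mem_forestsOn (hG : G ∈ forestsOn n I J)
    (hι : ι ∈ I) : deleteVertex G ι ∪ star ι (neighbors G ι J) = G :=
  deleteVertex_union_star_neighbors
    (edge_fst_snd_of_subset_edgesOn (subset_edgesOn_of_mem_forestsOn hG))
    fun _ => mem_of_adjE_root hG hι

lemma avoids_of_mem_forestsOn_erase_union (hιJ : ι ∉ J) (hK : K ⊆ J)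
    (hG' : G' ∈ forestsOn n (I.erase ι ∪ K) (J \ K)) : Avoids G' ι :=
  avoids_of_subset_edgesOn_erase
    (erase_union_union_sdiff hK hιJ ▸ subset_edgesOn_of_mem_forestsOn hG')

theorem deleteVertex_mem_forestsOn (hIJ : Disjoint I J) (hι : ι ∈ I)
    (hG : G ∈ forestsOn n I J) :
    deleteVertex G ι ∈ forestsOn n (I.erase ι ∪ neighbors G ι J) (J \ neighbors G ι J) := by
  set K := neighbors G ι J
  have hKJ : K ⊆ J := fun k hk => (mem_neighbors.1 hk).1
  obtain ⟨hGe, hcard, hreach⟩ := (mem_forestsOn_iff hIJ).1 hG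
  rw [mem_forestsOn_iff (disjoint_erase_union_sdiff hIJ),
    erase_union_union_sdiff hKJ (disjoint_left.1 hIJ hι)]
  refine ⟨deleteVertex_subset_edgesOn_erase hGe, ?_, fun v hv => ?_⟩
  · have := card_union_star (K := K) (avoids_deleteVertex (G := G) (ι := ι))
    rw [deleteVertex_union_star_neighbors_of_mem_forestsOn hG hι, hcard] at this
    rw [card_sdiff_of_subset hKJ]
    omega
  -- cutting the path from `v` to its root at its first visit to `ι` leaves a path to `K`
  refine ((hreach v (mem_of_mem_erase hv)).induction
    (P := fun u => u = ι ∨ Reaches (deleteVertex G ι) (I.erase ι ∪ K) u) ?_ ?_).resolve_left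
    (ne_of_mem_erase hv)
  · intro i hi
    by_cases hiι : i = ι
    · exact .inl hiι
    · exact .inr (.of_mem (mem_union_left _ (mem_erase.2 ⟨hiι, hi⟩)))
  · intro u c huc hc
    by_cases hu : u = ι
    · exact .inl hu
    by_cases hcι : c = ι
    · subst hcι
      exact .inr (.of_mem (mem_union_right _
        (mem_neighbors.2 ⟨mem_of_adjE_root hG hι (symm huc), symm huc⟩)))
    · exact .inr ((hc.resolve_left hcι).head (adjE_deleteVertex.2 ⟨huc, hu, hcι⟩))

theorem union_star_mem_forestsOn (hIJ : Disjoint I J) (hι : ι ∈ I) (hK : K ⊆ J)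
    (hG' : G' ∈ forestsOn n (I.erase ι ∪ K) (J \ K)) : G' ∪ star ι K ∈ forestsOn n I J := by
  have hιJ : ι ∉ J := disjoint_left.1 hIJ hι
  obtain ⟨hGe, hcard, hreach⟩ := (mem_forestsOn_iff (disjoint_erase_union_sdiff hIJ)).1 hG'
  rw [erase_union_union_sdiff hK hιJ] at hGe hreach
  rw [mem_forestsOn_iff hIJ]
  refine ⟨union_subset (hGe.trans (edgesOn_mono (erase_subset _ _)))
    (star_subset_edgesOn (mem_union_left _ hι) (hK.trans subset_union_right) (hιJ <| hK ·)),
    ?_, fun v hv => ?_⟩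
  · rw [card_union_star (avoids_of_mem_forestsOn_erase_union hιJ hK hG'), hcard,
      card_sdiff_of_subset hK]
    have := card_le_card hK
    omega
  by_cases hvι : v = ι
  · exact .of_mem (hvι ▸ hι)
  refine ((hreach v (mem_erase.2 ⟨hvι, hv⟩)).mono subset_union_left subset_rfl).trans
    fun r hr => ?_
  rcases mem_union.1 hr with hr | hr
  · exact .of_mem (mem_of_mem_erase hr)
  · exact Reaches.head (symm (adjE_union.2 (.inr (adjE_star_left.2 hr)))) (.of_mem hι)

end RootDeletion

end RootedForest

open Finset RootedForest

theorem forest_recursion_general (n : ℕ) (w : Fin n → Fin n → ℝ)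
    (hwsym : ∀ i j, w i j = w j i)
    (I J : Finset (Fin n)) (hdisj : Disjoint I J) (ι : Fin n) (hι : ι ∈ I) :
    ∑ G ∈ forestsOn n I J, ∏ p ∈ G, w p.1 p.2 =
      ∑ K ∈ J.powerset, (∏ i ∈ K, w i ι) *
        ∑ G ∈ forestsOn n (I.erase ι ∪ K) (J \ K), ∏ p ∈ G, w p.1 p.2 := by
  simp_rw [mul_sum]
  rw [sum_sigma']
  refine sum_nbij' (fun G => ⟨neighbors G ι J, deleteVertex G ι⟩)
    (fun x => x.2 ∪ star ι x.1) (fun G hG => ?_) (fun x hx => ?_) (fun G hG => ?_)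
    (fun x hx => ?_) (fun G hG => ?_)
  · exact mem_sigma.2 ⟨mem_powerset.2 fun k hk => (mem_neighbors.1 hk).1,
      deleteVertex_mem_forestsOn hdisj hι hG⟩
  · obtain ⟨hK, hG'⟩ := mem_sigma.1 hx
    exact union_star_mem_forestsOn hdisj hι (mem_powerset.1 hK) hG'
  · exact deleteVertex_union_star_neighbors_of_mem_forestsOn hG hι
  · obtain ⟨hK, hG'⟩ := mem_sigma.1 hx
    have hG'ι := avoids_of_mem_forestsOn_erase_union (disjoint_left.1 hdisj hι)
      (mem_powerset.1 hK) hG'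
    rw [neighbors_union_star hG'ι (mem_powerset.1 hK), deleteVertex_union_star hG'ι]
  · rw [← prod_union_star avoids_deleteVertex hwsym,
      deleteVertex_union_star_neighbors_of_mem_forestsOn hG hι]

/-- the root-deletion recursion for rooted forests. For disjoint
`I, J`, `ι ∈ I`, `I' = I ∖ {ι}` and nonnegative weights `w`:
`Σ_{G ∈ 𝓕_I(J)} ∏ w = Σ_{K⊆J} (∏_{i∈K} w_{iι}) Σ_{G' ∈ 𝓕_{I'∪K}(J∖K)} ∏ w`. -/
theorem forest_recursion (n : ℕ) (w : Fin n → Fin n → ℝ)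
    (hw : ∀ i j, 0 ≤ w i j) (hwsym : ∀ i j, w i j = w j i)
    (I J : Finset (Fin n)) (hdisj : Disjoint I J) (ι : Fin n) (hι : ι ∈ I) :
    ∑ G ∈ forestsOn n I J, ∏ p ∈ G, w p.1 p.2 =
      ∑ K ∈ J.powerset, (∏ i ∈ K, w i ι) *
        ∑ G ∈ forestsOn n (I.erase ι ∪ K) (J \ K), ∏ p ∈ G, w p.1 p.2 :=
  forest_recursion_general n w hwsym I J hdisj ι hι
end

section
/- Brydges–Battle–Federbush tree identity: for complex numbers v_{ij} = v_{ji}, 1 ≤ i < j ≤ n, one has Σ_{G ∈ 𝒞_n} ∏_{{i,j}∈G} (e^{−v_{ij}} − 1) = Σ_{T ∈ 𝒯_n} ∏_{{i,j}∈T} (−v_{ij}) ∫ dλ_T({s_{ij}}) e^{−Σ_{i<j} s_{ij} v_{ij}}, where λ_T is a probability measure on [0,1]^{n(n−1)/2} depending only on the tree T. -/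
open MeasureTheory

/-!
Fix a root `r`. Every connected graph `G` has a Penrose tree: each vertex `v ≠ r` is joined to
its least neighbour one BFS layer closer to `r`. The graphs with Penrose tree `T` form exactly
the interval `[T, R(T)]` of edge sets, where `R(T)` adds to `T` the edges inside a BFS layer of
`T` and the edges between consecutive layers that do not undercut the chosen parents. Summing
`∏ (e^{-v} - 1)` over that interval gives `∏_T (e^{-v} - 1) · ∏_{R(T) \ T} e^{-v}`. Since
`-v ∫₀¹ e^{-tv} dt = e^{-v} - 1`, this is `∏_T (-v)` times the integral of `e^{-∑ s v}` against
the product measure that is uniform on `[0,1]` on the edges of `T`, puts `s = 1` on `R(T) \ T`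
and `s = 0` elsewhere.
-/

namespace SimpleGraph

variable {V : Type*} {G H : SimpleGraph V} {r u v a b : V}

theorem Adj.dist_le_add_one (h : G.Adj a b) (r : V) : G.dist r b ≤ G.dist r a + 1 := by
  simpa [dist_eq_one_iff_adj.2 h] using h.reachable.dist_triangle_right r

theorem le_add_dist_of_forall_adj {f : V → ℕ} (hf : ∀ a b, G.Adj a b → f b ≤ f a + 1)
    (h : G.Reachable u v) : f v ≤ f u + G.dist u v := by
  obtain ⟨p, hp⟩ := h.exists_walk_length_eq_dist
  rw [← hp]
  clear hp h
  induction p with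
  | nil => simp
  | cons hadj _ ih =>
    have := hf _ _ hadj
    rw [Walk.length_cons]
    omega

theorem dist_eq_of_le_of_forall_adj (hHG : H ≤ G) (hH : H.Connected)
    (hstep : ∀ a b, G.Adj a b → H.dist r b ≤ H.dist r a + 1) (v : V) :
    G.dist r v = H.dist r v := by
  refine le_antisymm ((hH r v).dist_anti hHG) ?_
  simpa using le_add_dist_of_forall_adj hstep ((hH r v).mono hHG)

variable [Fintype V]

open Classical in
noncomputable def bfsParents (G : SimpleGraph V) (r v : V) : Finset V :=
  {u | G.Adj u v ∧ G.dist r u + 1 = G.dist r v}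

theorem mem_bfsParents : u ∈ G.bfsParents r v ↔ G.Adj u v ∧ G.dist r u + 1 = G.dist r v := by
  simp [bfsParents]

theorem bfsParents_nonempty (h : G.Reachable r v) (hv : v ≠ r) : (G.bfsParents r v).Nonempty := by
  obtain ⟨p, hp⟩ := h.symm.exists_walk_length_eq_dist
  cases p with
  | nil => exact absurd rfl hv
  | @cons _ u _ hvu q =>
    refine ⟨u, mem_bfsParents.2 ⟨hvu.symm, ?_⟩⟩
    have hq : G.dist r u ≤ q.length := dist_comm (G := G) ▸ dist_le q
    have := hvu.symm.dist_le_add_one r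
    rw [Walk.length_cons, dist_comm] at hp
    omega

variable [LinearOrder V]

/-- The junk value `v` is returned when `v` has no neighbour one layer closer to `r`
(`v = r`, or `v` unreachable). -/
noncomputable def bfsParent (G : SimpleGraph V) (r v : V) : V :=
  if h : (G.bfsParents r v).Nonempty then (G.bfsParents r v).min' h else v

theorem bfsParent_mem (h : (G.bfsParents r v).Nonempty) : G.bfsParent r v ∈ G.bfsParents r v := by
  rw [bfsParent, dif_pos h]
  exact Finset.min'_mem _ _

theorem bfsParent_le (hu : u ∈ G.bfsParents r v) : G.bfsParent r v ≤ u := by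
  rw [bfsParent, dif_pos ⟨u, hu⟩]
  exact Finset.min'_le _ _ hu

theorem adj_bfsParent (h : G.Reachable r v) (hv : v ≠ r) : G.Adj (G.bfsParent r v) v :=
  (mem_bfsParents.1 (bfsParent_mem (bfsParents_nonempty h hv))).1

theorem dist_bfsParent_add_one (h : G.Reachable r v) (hv : v ≠ r) :
    G.dist r (G.bfsParent r v) + 1 = G.dist r v :=
  (mem_bfsParents.1 (bfsParent_mem (bfsParents_nonempty h hv))).2

theorem bfsParent_le_bfsParent (hHG : H ≤ G) (hdist : ∀ u, H.dist r u = G.dist r u)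
    (h : (H.bfsParents r v).Nonempty) : G.bfsParent r v ≤ H.bfsParent r v := by
  obtain ⟨hadj, hd⟩ := mem_bfsParents.1 (bfsParent_mem h)
  exact bfsParent_le (mem_bfsParents.2 ⟨hHG hadj, by rwa [← hdist, ← hdist]⟩)

theorem reachable_and_dist_le_of_adj_bfsParent (hG : G.Connected)
    (hH : ∀ v, v ≠ r → H.Adj (G.bfsParent r v) v) (v : V) :
    H.Reachable r v ∧ H.dist r v ≤ G.dist r v := by
  induction hk : G.dist r v using Nat.strong_induction_on generalizing v with
  | _ k ih =>
    by_cases hv : v = r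
    · subst hv
      simp
    have hp := dist_bfsParent_add_one (hG r v) hv
    obtain ⟨hreach, hle⟩ := ih _ (by omega) (G.bfsParent r v) rfl
    exact ⟨hreach.trans (hH v hv).reachable, ((hH v hv).dist_le_add_one r).trans (by omega)⟩

def LayerStep (G : SimpleGraph V) (r a b : V) : Prop :=
  G.dist r b ≤ G.dist r a + 1 ∧ (G.dist r b = G.dist r a + 1 → G.bfsParent r b ≤ a)

def PenroseCompatible (G : SimpleGraph V) (r a b : V) : Prop :=
  G.LayerStep r a b ∧ G.LayerStep r b a

theorem PenroseCompatible.symm (h : G.PenroseCompatible r a b) : G.PenroseCompatible r b a :=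
  And.symm h

theorem Adj.layerStep (h : G.Adj a b) : G.LayerStep r a b :=
  ⟨h.dist_le_add_one r, fun hd => bfsParent_le (mem_bfsParents.2 ⟨h, hd.symm⟩)⟩

theorem Adj.penroseCompatible (h : G.Adj a b) : G.PenroseCompatible r a b :=
  ⟨h.layerStep, h.symm.layerStep⟩

theorem bfsParent_eq_of_le_of_forall_adj (hHG : H ≤ G) (hH : H.Connected)
    (hstep : ∀ a b, G.Adj a b → H.LayerStep r a b) (hv : v ≠ r) :
    G.bfsParent r v = H.bfsParent r v := by
  have hdist := dist_eq_of_le_of_forall_adj hHG hH fun a b h => (hstep a b h).1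
  refine le_antisymm (bfsParent_le_bfsParent hHG (fun u => (hdist u).symm)
    (bfsParents_nonempty (hH r v) hv)) ?_
  obtain ⟨hadj, hd⟩ := mem_bfsParents.1
    (bfsParent_mem (bfsParents_nonempty ((hH r v).mono hHG) hv))
  exact (hstep _ _ hadj).2 (by rw [← hdist, ← hdist, hd])

end SimpleGraph

def sortPair {α : Type*} [LinearOrder α] (a b : α) : α × α := (min a b, max a b)

theorem sortPair_eq_sortPair_iff {α : Type*} [LinearOrder α] {a b c d : α} :
    sortPair a b = sortPair c d ↔ (a = c ∧ b = d) ∨ (a = d ∧ b = c) := by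
  simp only [sortPair, Prod.mk.injEq]
  rcases le_total a b with hab | hab <;> rcases le_total c d with hcd | hcd <;>
    simp only [min_eq_left, min_eq_right, max_eq_left, max_eq_right, hab, hcd] <;>
    constructor <;> rintro (⟨rfl, rfl⟩ | ⟨rfl, rfl⟩) <;> simp_all [le_antisymm_iff]

theorem Finset.sum_prod_Icc {α R : Type*} [DecidableEq α] [CommSemiring R] {s t : Finset α}
    (h : s ⊆ t) (w : α → R) :
    ∑ u ∈ Icc s t, ∏ p ∈ u, w p = (∏ p ∈ s, w p) * ∏ p ∈ t \ s, (1 + w p) := by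
  have hdisj : ∀ u ∈ (t \ s).powerset, Disjoint s u := fun u hu =>
    disjoint_of_subset_right (mem_powerset.1 hu) disjoint_sdiff
  rw [Icc_eq_image_powerset h, sum_image, prod_one_add, mul_sum]
  · exact sum_congr rfl fun u hu => prod_union (hdisj u hu)
  · intro u hu u' hu' huu
    rw [← union_sdiff_cancel_left (hdisj u hu), ← union_sdiff_cancel_left (hdisj u' hu')]
    exact congrArg (· \ s) huu

open Finset SimpleGraph

variable {n : ℕ} {G H T : Finset (Fin n × Fin n)} {r a b v : Fin n}

def graphOf (G : Finset (Fin n × Fin n)) : SimpleGraph (Fin n) :=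
  SimpleGraph.fromRel fun i j => (i, j) ∈ G

theorem graphOf_adj : (graphOf G).Adj a b ↔ a ≠ b ∧ adjE G a b := by
  simp [graphOf, adjE]

theorem graphOf_mono (h : G ⊆ H) : graphOf G ≤ graphOf H :=
  fun _ _ hab => graphOf_adj.2 ⟨(graphOf_adj.1 hab).1, (graphOf_adj.1 hab).2.imp (@h _) (@h _)⟩

theorem mem_edgesOn_univ {p : Fin n × Fin n} : p ∈ edgesOn n univ ↔ p.1 < p.2 := by
  simp [edgesOn]

theorem sortPair_mem_edgesOn_univ (h : a ≠ b) : sortPair a b ∈ edgesOn n univ :=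
  mem_edgesOn_univ.2 (min_lt_max.2 h)

theorem graphOf_adj_iff_sortPair_mem (hG : G ⊆ edgesOn n univ) :
    (graphOf G).Adj a b ↔ sortPair a b ∈ G := by
  have hlt : ∀ {p}, p ∈ G → p.1 < p.2 := fun hp => mem_edgesOn_univ.1 (hG hp)
  rw [graphOf_adj, adjE]
  rcases lt_trichotomy a b with hab | rfl | hab
  · have : (b, a) ∉ G := fun h => (hlt h).asymm hab
    simp [sortPair, hab.le, hab.ne, this]
  · simp only [ne_eq, not_true_eq_false, false_and, false_iff]
    exact fun h => (hlt h).ne (by simp [sortPair])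
  · have : (a, b) ∉ G := fun h => (hlt h).asymm hab
    simp [sortPair, hab.le, hab.ne', this]

theorem reflTransGen_adjE_iff_reachable {i j : Fin n} :
    Relation.ReflTransGen (adjE G) i j ↔ (graphOf G).Reachable i j := by
  rw [reachable_iff_reflTransGen]
  refine ⟨fun h => ?_, Relation.ReflTransGen.mono (fun _ _ hab => (graphOf_adj.1 hab).2) _ _⟩
  induction h with
  | refl => rfl
  | @tail b c _ hbc ih =>
    by_cases hne : b = c
    · rwa [← hne]
    · exact ih.tail (graphOf_adj.2 ⟨hne, hbc⟩)

theorem connOn_univ_iff : ConnOn univ G ↔ (graphOf G).Connected := by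
  simp only [ConnOn, connected_iff, Preconnected, univ_nonempty_iff, mem_univ, true_implies,
    reflTransGen_adjE_iff_reachable, and_comm]

theorem mem_connGraphsOn_univ :
    G ∈ connGraphsOn n univ ↔ G ⊆ edgesOn n univ ∧ (graphOf G).Connected := by
  simp [connGraphsOn, graphsOn, connOn_univ_iff]

theorem mem_treesOn :
    T ∈ treesOn n ↔ (T ⊆ edgesOn n univ ∧ (graphOf T).Connected) ∧ T.card = n - 1 := by
  rw [treesOn, mem_filter, mem_connGraphsOn_univ]

theorem connGraphsOn_univ_eq_empty [IsEmpty (Fin n)] : connGraphsOn n univ = ∅ :=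
  eq_empty_of_forall_notMem fun _ hG => (mem_connGraphsOn_univ.1 hG).2.nonempty.elim isEmptyElim

noncomputable def penroseTree (G : Finset (Fin n × Fin n)) (r : Fin n) : Finset (Fin n × Fin n) :=
  (univ.erase r).image fun v => sortPair ((graphOf G).bfsParent r v) v

theorem mem_penroseTree {p : Fin n × Fin n} :
    p ∈ penroseTree G r ↔ ∃ v, v ≠ r ∧ sortPair ((graphOf G).bfsParent r v) v = p := by
  simp [penroseTree]

theorem penroseTree_subset_edgesOn (hc : (graphOf G).Connected) :
    penroseTree G r ⊆ edgesOn n univ := by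
  intro p hp
  obtain ⟨v, hv, rfl⟩ := mem_penroseTree.1 hp
  exact sortPair_mem_edgesOn_univ (adj_bfsParent (hc r v) hv).ne

theorem graphOf_penroseTree_adj (hc : (graphOf G).Connected) :
    (graphOf (penroseTree G r)).Adj a b ↔
      (b ≠ r ∧ a = (graphOf G).bfsParent r b) ∨
        (a ≠ r ∧ b = (graphOf G).bfsParent r a) := by
  rw [graphOf_adj_iff_sortPair_mem (penroseTree_subset_edgesOn hc), mem_penroseTree]
  simp only [sortPair_eq_sortPair_iff]
  constructor
  · rintro ⟨v, hv, ⟨rfl, rfl⟩ | ⟨rfl, rfl⟩⟩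
    exacts [Or.inl ⟨hv, rfl⟩, Or.inr ⟨hv, rfl⟩]
  · rintro (⟨hb, rfl⟩ | ⟨ha, rfl⟩)
    exacts [⟨b, hb, Or.inl ⟨rfl, rfl⟩⟩, ⟨a, ha, Or.inr ⟨rfl, rfl⟩⟩]

theorem adj_bfsParent_penroseTree (hc : (graphOf G).Connected) (hv : v ≠ r) :
    (graphOf (penroseTree G r)).Adj ((graphOf G).bfsParent r v) v :=
  (graphOf_penroseTree_adj hc).2 (Or.inl ⟨hv, rfl⟩)

theorem penroseTree_subset (hG : G ⊆ edgesOn n univ) (hc : (graphOf G).Connected) :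
    penroseTree G r ⊆ G := by
  intro p hp
  obtain ⟨v, hv, rfl⟩ := mem_penroseTree.1 hp
  exact (graphOf_adj_iff_sortPair_mem hG).1 (adj_bfsParent (hc r v) hv)

theorem card_penroseTree (hc : (graphOf G).Connected) : (penroseTree G r).card = n - 1 := by
  rw [penroseTree, card_image_of_injOn, card_erase_of_mem (mem_univ r), card_univ,
    Fintype.card_fin]
  intro v hv w hw h
  have hdv := dist_bfsParent_add_one (hc r v) (ne_of_mem_erase hv)
  have hdw := dist_bfsParent_add_one (hc r w) (ne_of_mem_erase hw)
  rcases sortPair_eq_sortPair_iff.1 h with ⟨-, hvw⟩ | ⟨hv', hw'⟩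
  · exact hvw
  -- two vertices cannot be each other's parent: each would be one layer below the other
  · rw [hv'] at hdv
    rw [← hw'] at hdw
    omega

theorem reachable_and_dist_le_penroseTree (hc : (graphOf G).Connected) (v : Fin n) :
    (graphOf (penroseTree G r)).Reachable r v ∧
      (graphOf (penroseTree G r)).dist r v ≤ (graphOf G).dist r v :=
  reachable_and_dist_le_of_adj_bfsParent hc (fun _ hv => adj_bfsParent_penroseTree hc hv) v

theorem connected_penroseTree (hc : (graphOf G).Connected) :
    (graphOf (penroseTree G r)).Connected :=
  haveI := hc.nonempty
  ⟨fun u v => (reachable_and_dist_le_penroseTree hc u).1.symm.trans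
    (reachable_and_dist_le_penroseTree hc v).1⟩

theorem dist_penroseTree (hG : G ⊆ edgesOn n univ) (hc : (graphOf G).Connected) (v : Fin n) :
    (graphOf (penroseTree G r)).dist r v = (graphOf G).dist r v :=
  le_antisymm (reachable_and_dist_le_penroseTree hc v).2
    ((reachable_and_dist_le_penroseTree hc v).1.dist_anti (graphOf_mono (penroseTree_subset hG hc)))

theorem bfsParent_penroseTree (hG : G ⊆ edgesOn n univ) (hc : (graphOf G).Connected)
    (hv : v ≠ r) :
    (graphOf (penroseTree G r)).bfsParent r v = (graphOf G).bfsParent r v := by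
  refine le_antisymm (bfsParent_le (mem_bfsParents.2 ⟨adj_bfsParent_penroseTree hc hv, ?_⟩))
    (bfsParent_le_bfsParent (graphOf_mono (penroseTree_subset hG hc)) (dist_penroseTree hG hc)
      (bfsParents_nonempty (connected_penroseTree hc r v) hv))
  rw [dist_penroseTree hG hc, dist_penroseTree hG hc, dist_bfsParent_add_one (hc r v) hv]

theorem layerStep_penroseTree (hG : G ⊆ edgesOn n univ) (hc : (graphOf G).Connected)
    (h : (graphOf G).LayerStep r a b) : (graphOf (penroseTree G r)).LayerStep r a b := by
  simp only [LayerStep, dist_penroseTree hG hc] at h ⊢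
  refine ⟨h.1, fun hd => ?_⟩
  have hb : b ≠ r := by
    rintro rfl
    simp at hd
  rw [bfsParent_penroseTree hG hc hb]
  exact h.2 hd

theorem mem_treesOn_penroseTree (hG : G ∈ connGraphsOn n univ) :
    penroseTree G r ∈ treesOn n := by
  obtain ⟨hGe, hc⟩ := mem_connGraphsOn_univ.1 hG
  exact mem_treesOn.2 ⟨⟨(penroseTree_subset hGe hc).trans hGe, connected_penroseTree hc⟩,
    card_penroseTree hc⟩

theorem penroseTree_eq_self (hT : T ∈ treesOn n) : penroseTree T r = T := by
  obtain ⟨⟨hTe, hc⟩, hcard⟩ := mem_treesOn.1 hT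
  exact eq_of_subset_of_card_le (penroseTree_subset hTe hc) (by rw [card_penroseTree hc, hcard])

open Classical in
/-- The largest graph whose Penrose tree is `T`. -/
noncomputable def maxPenroseGraph (T : Finset (Fin n × Fin n)) (r : Fin n) :
    Finset (Fin n × Fin n) :=
  {p ∈ edgesOn n univ | (graphOf T).PenroseCompatible r p.1 p.2}

theorem maxPenroseGraph_subset_edgesOn : maxPenroseGraph T r ⊆ edgesOn n univ := by
  classical
  exact filter_subset _ _

theorem subset_maxPenroseGraph_iff (hG : G ⊆ edgesOn n univ) :
    G ⊆ maxPenroseGraph T r ↔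
      ∀ a b, (graphOf G).Adj a b → (graphOf T).PenroseCompatible r a b := by
  classical
  simp only [maxPenroseGraph, subset_iff, mem_filter]
  constructor
  · intro h a b hab
    rcases (graphOf_adj.1 hab).2 with hm | hm
    exacts [(h hm).2, (h hm).2.symm]
  · intro h p hp
    exact ⟨hG hp, h _ _ (graphOf_adj.2 ⟨(mem_edgesOn_univ.1 (hG hp)).ne, Or.inl hp⟩)⟩

theorem subset_maxPenroseGraph_self (hT : T ⊆ edgesOn n univ) : T ⊆ maxPenroseGraph T r :=
  (subset_maxPenroseGraph_iff hT).2 fun _ _ h => h.penroseCompatible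

theorem subset_maxPenroseGraph_penroseTree (hG : G ⊆ edgesOn n univ)
    (hc : (graphOf G).Connected) : G ⊆ maxPenroseGraph (penroseTree G r) r :=
  (subset_maxPenroseGraph_iff hG).2 fun _ _ h =>
    ⟨layerStep_penroseTree hG hc h.layerStep, layerStep_penroseTree hG hc h.symm.layerStep⟩

theorem penroseTree_eq_of_subset (hT : T ∈ treesOn n) (hTG : T ⊆ G)
    (hGR : G ⊆ maxPenroseGraph T r) : penroseTree G r = T := by
  obtain ⟨⟨-, hTc⟩, -⟩ := mem_treesOn.1 hT
  have hstep : ∀ a b, (graphOf G).Adj a b → (graphOf T).LayerStep r a b := fun a b hab =>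
    ((subset_maxPenroseGraph_iff (hGR.trans maxPenroseGraph_subset_edgesOn)).1 hGR a b hab).1
  conv_rhs => rw [← penroseTree_eq_self (r := r) hT]
  refine image_congr fun v hv => ?_
  simp only [bfsParent_eq_of_le_of_forall_adj (graphOf_mono hTG) hTc hstep (ne_of_mem_erase hv)]

theorem filter_penroseTree_eq (hT : T ∈ treesOn n) :
    {G ∈ connGraphsOn n univ | penroseTree G r = T} = Icc T (maxPenroseGraph T r) := by
  classical
  ext G
  rw [mem_filter, mem_Icc]
  constructor
  · rintro ⟨hG, rfl⟩
    obtain ⟨hGe, hc⟩ := mem_connGraphsOn_univ.1 hG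
    exact ⟨penroseTree_subset hGe hc, subset_maxPenroseGraph_penroseTree hGe hc⟩
  · rintro ⟨hTG, hGR⟩
    refine ⟨mem_connGraphsOn_univ.2 ⟨hGR.trans maxPenroseGraph_subset_edgesOn, ?_⟩,
      penroseTree_eq_of_subset hT hTG hGR⟩
    exact (mem_treesOn.1 hT).1.2.mono (graphOf_mono hTG)

theorem sum_connGraphsOn_eq_sum_treesOn {R : Type*} [CommSemiring R] (r : Fin n)
    (w : Fin n × Fin n → R) :
    ∑ G ∈ connGraphsOn n univ, ∏ p ∈ G, w p =
      ∑ T ∈ treesOn n, (∏ p ∈ T, w p) * ∏ p ∈ maxPenroseGraph T r \ T, (1 + w p) := by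
  rw [← sum_fiberwise_of_maps_to (g := fun G => penroseTree G r)
    fun _ hG => mem_treesOn_penroseTree hG]
  refine sum_congr rfl fun T hT => ?_
  rw [filter_penroseTree_eq hT, sum_prod_Icc (subset_maxPenroseGraph_self (mem_treesOn.1 hT).1.1)]

section interpolation

variable {ι : Type*} [DecidableEq ι] {T R E : Finset ι} {c : ι → ℝ} {p : ι}

noncomputable def edgeMeasure (T : Finset ι) (c : ι → ℝ) (p : ι) : Measure ℝ :=
  if p ∈ T then volume.restrict (Set.Ioc 0 1) else Measure.dirac (c p)

instance (T : Finset ι) (c : ι → ℝ) (p : ι) : IsProbabilityMeasure (edgeMeasure T c p) := by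
  unfold edgeMeasure
  split_ifs
  · exact ⟨by simp⟩
  · infer_instance

theorem neg_mul_integral_edgeMeasure_of_mem (hp : p ∈ T) (w : ℂ) :
    -w * ∫ t : ℝ, Complex.exp (-((t : ℂ) * w)) ∂edgeMeasure T c p =
      Complex.exp (-w) - 1 := by
  rw [edgeMeasure, if_pos hp, ← intervalIntegral.integral_of_le zero_le_one]
  rcases eq_or_ne w 0 with rfl | hw
  · simp
  simp_rw [show ∀ x : ℝ, -((x : ℂ) * w) = -w * x from fun x => by ring]
  rw [integral_exp_mul_complex (neg_ne_zero.2 hw), mul_div_cancel₀ _ (neg_ne_zero.2 hw)]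
  simp

theorem integral_edgeMeasure_of_notMem (hp : p ∉ T) (f : ℝ → ℂ) :
    ∫ t, f t ∂edgeMeasure T c p = f (c p) := by
  rw [edgeMeasure, if_neg hp, integral_dirac]

variable [Fintype ι]

noncomputable def interpolationMeasure (T : Finset ι) (c : ι → ℝ) : Measure (ι → ℝ) :=
  Measure.pi (edgeMeasure T c)

instance (T : Finset ι) (c : ι → ℝ) : IsProbabilityMeasure (interpolationMeasure T c) :=
  Measure.pi.instIsProbabilityMeasure _

theorem ae_mem_Icc_interpolationMeasure (hc : ∀ p, c p ∈ Set.Icc 0 1) :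
    ∀ᵐ s ∂interpolationMeasure T c, ∀ p, s p ∈ Set.Icc (0 : ℝ) 1 := by
  refine ae_all_iff.2 fun p => Measure.tendsto_eval_ae_ae.eventually (p := (· ∈ Set.Icc 0 1)) ?_
  unfold edgeMeasure
  split_ifs
  · filter_upwards [ae_restrict_mem measurableSet_Ioc] with x hx using Set.Ioc_subset_Icc_self hx
  · exact (ae_dirac_iff measurableSet_Icc).2 (hc p)

theorem integral_exp_interpolationMeasure (E : Finset ι) (w : ι → ℂ) :
    ∫ s, Complex.exp (-∑ p ∈ E, (s p : ℂ) * w p) ∂interpolationMeasure T c =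
      ∏ p ∈ E, ∫ t : ℝ, Complex.exp (-((t : ℂ) * w p)) ∂edgeMeasure T c p := by
  have hprod (s : ι → ℝ) : Complex.exp (-∑ p ∈ E, (s p : ℂ) * w p) =
      ∏ p, if p ∈ E then Complex.exp (-((s p : ℂ) * w p)) else 1 := by
    rw [prod_ite_mem, univ_inter, ← Complex.exp_sum, sum_neg_distrib]
  simp_rw [hprod]
  rw [interpolationMeasure, integral_fintype_prod_eq_prod
    (fun p (t : ℝ) => if p ∈ E then Complex.exp (-((t : ℂ) * w p)) else 1), ← univ_inter E,
    ← prod_ite_mem]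
  refine prod_congr rfl fun p _ => ?_
  by_cases hp : p ∈ E <;> simp [hp]

theorem mul_integral_exp_interpolationMeasure (hTE : T ⊆ E) (hRE : R ⊆ E) (v : ι → ℂ) :
    (∏ p ∈ T, -v p) * ∫ s, Complex.exp (-∑ p ∈ E, (s p : ℂ) * v p)
        ∂interpolationMeasure T (fun p => if p ∈ R then 1 else 0) =
      (∏ p ∈ T, (Complex.exp (-v p) - 1)) * ∏ p ∈ R \ T, Complex.exp (-v p) := by
  rw [integral_exp_interpolationMeasure, ← prod_sdiff hTE, mul_left_comm, ← prod_mul_distrib,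
    prod_congr rfl fun p hp => neg_mul_integral_edgeMeasure_of_mem hp (v p), mul_comm]
  congr 1
  rw [prod_congr rfl fun p hp => integral_edgeMeasure_of_notMem (mem_sdiff.1 hp).2 _,
    ← prod_subset (sdiff_subset_sdiff hRE le_rfl)]
  · refine prod_congr rfl fun p hp => ?_
    simp [(mem_sdiff.1 hp).1]
  · intro p hpE hpR
    have : p ∉ R := fun h => hpR (mem_sdiff.2 ⟨h, (mem_sdiff.1 hpE).2⟩)
    simp [this]

end interpolation

/-- The measure `λ_T` of the theorem. -/
noncomputable def penroseMeasure (T : Finset (Fin n × Fin n)) (r : Fin n) :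
    Measure ((Fin n × Fin n) → ℝ) :=
  interpolationMeasure T fun p => if p ∈ maxPenroseGraph T r then 1 else 0

theorem BBF_tree_identity_general (n : ℕ) :
    ∃ lam : Finset (Fin n × Fin n) → Measure ((Fin n × Fin n) → ℝ),
      (∀ T ∈ treesOn n, IsProbabilityMeasure (lam T) ∧
        ∀ᵐ s ∂(lam T), ∀ p, s p ∈ Set.Icc (0 : ℝ) 1) ∧
      ∀ v : Fin n → Fin n → ℂ, (∀ i j, v i j = v j i) →
        ∑ G ∈ connGraphsOn n Finset.univ,
            ∏ p ∈ G, (Complex.exp (-(v p.1 p.2)) - 1) =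
          ∑ T ∈ treesOn n, (∏ p ∈ T, (-(v p.1 p.2))) *
            ∫ s, Complex.exp
                (-(∑ p ∈ edgesOn n Finset.univ, (s p : ℂ) * v p.1 p.2))
              ∂(lam T) := by
  rcases isEmpty_or_nonempty (Fin n) with hn | ⟨⟨r⟩⟩
  · have hC : connGraphsOn n univ = ∅ := connGraphsOn_univ_eq_empty
    have hT : treesOn n = ∅ := subset_empty.1 (hC ▸ filter_subset _ _)
    exact ⟨fun _ => 0, by simp [hT], fun v _ => by rw [hC, hT, sum_empty, sum_empty]⟩
  refine ⟨fun T => penroseMeasure T r, fun T _ =>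
    ⟨inferInstanceAs (IsProbabilityMeasure (interpolationMeasure _ _)),
      ae_mem_Icc_interpolationMeasure fun p => ?_⟩, fun v _ => ?_⟩
  · split_ifs <;> simp
  rw [sum_connGraphsOn_eq_sum_treesOn r]
  refine sum_congr rfl fun T hT => ?_
  dsimp only [penroseMeasure]
  rw [mul_integral_exp_interpolationMeasure (mem_treesOn.1 hT).1.1
    maxPenroseGraph_subset_edgesOn]
  simp_rw [add_sub_cancel]

/-- the Brydges–Battle–Federbush tree identity.  There exists a
family of probability measures `λ_T` on `[0,1]^{pairs}`, indexed by trees `T`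
on `{1,…,n}`, such that for every symmetric family of complex couplings `v`:
`Σ_{G∈𝒞_n} ∏_{{i,j}∈G} (e^{-v_{ij}} - 1)
  = Σ_{T∈𝒯_n} ∏_{{i,j}∈T} (-v_{ij}) ∫ dλ_T({s}) e^{-Σ_{i<j} s_{ij} v_{ij}}`. -/
theorem BBF_tree_identity (n : ℕ) (hn : 1 ≤ n) :
    ∃ lam : Finset (Fin n × Fin n) → Measure ((Fin n × Fin n) → ℝ),
      (∀ T ∈ treesOn n, IsProbabilityMeasure (lam T) ∧
        ∀ᵐ s ∂(lam T), ∀ p, s p ∈ Set.Icc (0 : ℝ) 1) ∧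
      ∀ v : Fin n → Fin n → ℂ, (∀ i j, v i j = v j i) →
        ∑ G ∈ connGraphsOn n Finset.univ,
            ∏ p ∈ G, (Complex.exp (-(v p.1 p.2)) - 1) =
          ∑ T ∈ treesOn n, (∏ p ∈ T, (-(v p.1 p.2))) *
            ∫ s, Complex.exp
                (-(∑ p ∈ edgesOn n Finset.univ, (s p : ℂ) * v p.1 p.2))
              ∂(lam T) :=
  BBF_tree_identity_general n
end
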